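/- Let D be an n×n matrix over ℤ/2 with D·D = 0, let V be an upper-triangular n×n matrix over ℤ/2 with all diagonal entries equal to 1, and suppose R = D·V is reduced. Let p be the number of indices j whose column R_j is nonzero, and let k be the number of indices i such that column R_i is zero and i is not equal to low(R, j) for any index j with nonzero column R_j. Then n = 2·p + k. (Matrix-level content of Theorem: the iterated Morse complex of a filtered complex with p finite and k infinite persistence intervals has exactly 2p + k cells.) -/

import Mathlib

/-- The `j`-th column of the matrix `R`. -/
def column {n : ℕ} (R : Matrix (Fin n) (Fin n) (ZMod 2)) (j : Fin n) : Fin n → ZMod 2 :=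
  fun i => R i j

/-- `low v` is the largest index at which the vector `v` over `ℤ/2` is nonzero
(`⊥` if `v = 0`). -/
def low {n : ℕ} (v : Fin n → ZMod 2) : WithBot (Fin n) :=
  (Finset.univ.filter (fun i => v i ≠ 0)).max

/-- `lowM R j` is the lowest-one position of the `j`-th column of `R`. -/
def lowM {n : ℕ} (R : Matrix (Fin n) (Fin n) (ZMod 2)) (j : Fin n) : WithBot (Fin n) :=
  low (column R j)

/-- A matrix over `ℤ/2` is reduced if its nonzero columns have pairwise distinct
lowest-one positions. -/
def ReducedMat {n : ℕ} (R : Matrix (Fin n) (Fin n) (ZMod 2)) : Prop :=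
  ∀ j k : Fin n, j ≠ k → column R j ≠ 0 → column R k ≠ 0 → lowM R j ≠ lowM R k

/-- A matrix is upper-triangular with all diagonal entries equal to `1`. -/
def IsUpperUnitriangular {n : ℕ} (V : Matrix (Fin n) (Fin n) (ZMod 2)) : Prop :=
  (∀ i j : Fin n, j < i → V i j = 0) ∧ ∀ i : Fin n, V i i = 1

/-!
Writing `R = D V`, a nonzero column `R_j` with lowest one in row `i` gives the vector
`y = V⁻¹ R_j`, which still has its lowest one in row `i` because `V` is upper unitriangular,
and satisfies `R y = D R_j = D D V_j = 0`. In a reduced matrix the nonzero columns are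
linearly independent (their lowest ones are distinct), so `R y = 0` with `y_i ≠ 0` forces
`R_i = 0`. Hence the pivot rows `low(R, j)` are `p` distinct indices of zero columns, and the
indices split into `p` nonzero columns, `p` pivot rows and `k` remaining zero columns.
-/

open Matrix

lemma low_eq_bot_iff {n : ℕ} {v : Fin n → ZMod 2} : low v = ⊥ ↔ v = 0 := by
  simp [low, Finset.max_eq_bot, Finset.filter_eq_empty_iff, funext_iff]

lemma apply_ne_zero_of_low_eq {n : ℕ} {v : Fin n → ZMod 2} {i : Fin n} (h : low v = i) :
    v i ≠ 0 :=
  (Finset.mem_filter.1 (Finset.mem_of_max h)).2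

lemma apply_eq_zero_of_low_lt {n : ℕ} {v : Fin n → ZMod 2} {i : Fin n} (h : low v < i) :
    v i = 0 := by
  by_contra hi
  exact (Finset.le_max (Finset.mem_filter.2 ⟨Finset.mem_univ i, hi⟩)).not_gt h

lemma low_eq_coe_iff {n : ℕ} {v : Fin n → ZMod 2} {i : Fin n} :
    low v = i ↔ v i ≠ 0 ∧ ∀ m, i < m → v m = 0 := by
  refine ⟨fun h => ⟨apply_ne_zero_of_low_eq h, fun m hm =>
    apply_eq_zero_of_low_lt (h ▸ WithBot.coe_lt_coe.2 hm)⟩, fun ⟨hi, hgt⟩ => ?_⟩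
  refine le_antisymm (Finset.max_le fun m hm => WithBot.coe_le_coe.2 ?_)
    (Finset.le_max (Finset.mem_filter.2 ⟨Finset.mem_univ i, hi⟩))
  exact not_lt.1 fun him => (Finset.mem_filter.1 hm).2 (hgt m him)

lemma IsUpperUnitriangular.isUnit_det {n : ℕ} {V : Matrix (Fin n) (Fin n) (ZMod 2)}
    (hV : IsUpperUnitriangular V) : IsUnit V.det := by
  rw [det_of_isUpperTriangular fun a b hab => hV.1 a b hab]
  simp [hV.2]

lemma IsUpperUnitriangular.low_mulVec {n : ℕ} {V : Matrix (Fin n) (Fin n) (ZMod 2)}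
    (hV : IsUpperUnitriangular V) (y : Fin n → ZMod 2) : low (V *ᵥ y) = low y := by
  cases hy : low y with
  | bot => rw [low_eq_bot_iff, low_eq_bot_iff.1 hy, mulVec_zero]
  | coe i =>
    obtain ⟨hyi, hgt⟩ := low_eq_coe_iff.1 hy
    have hterm : ∀ l m, i ≤ l → m ≠ l → V l m * y m = 0 := fun l m hil hml => by
      rcases hml.lt_or_gt with hml | hlm
      · rw [hV.1 l m hml, zero_mul]
      · rw [hgt m (hil.trans_lt hlm), mul_zero]
    refine low_eq_coe_iff.2 ⟨?_, fun l hil => ?_⟩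
    · rwa [mulVec, dotProduct, Finset.sum_eq_single i (fun m _ hmi => hterm i m le_rfl hmi)
        (by simp), hV.2, one_mul]
    · rw [mulVec, dotProduct]
      refine Finset.sum_eq_zero fun m _ => ?_
      by_cases hml : m = l
      · rw [hml, hgt l hil, mul_zero]
      · exact hterm l m hil.le hml

lemma column_mul {n : ℕ} (A B : Matrix (Fin n) (Fin n) (ZMod 2)) (j : Fin n) :
    column (A * B) j = A *ᵥ column B j := by
  funext i
  simp [column, mul_apply, mulVec, dotProduct]

lemma ReducedMat.apply_eq_zero_of_mulVec_eq_zero {n : ℕ} {R : Matrix (Fin n) (Fin n) (ZMod 2)}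
    (hR : ReducedMat R) {y : Fin n → ZMod 2} (hRy : R *ᵥ y = 0) {j : Fin n}
    (hj : column R j ≠ 0) : y j = 0 := by
  classical
  by_contra hyj
  set T := Finset.univ.filter fun m => y m ≠ 0 ∧ column R m ≠ 0
  obtain ⟨m, hmT, hmax⟩ := Finset.exists_max_image T (lowM R)
    ⟨j, Finset.mem_filter.2 ⟨Finset.mem_univ j, hyj, hj⟩⟩
  obtain ⟨hym, hm⟩ := (Finset.mem_filter.1 hmT).2
  obtain ⟨i, hi⟩ := WithBot.ne_bot_iff_exists.1 (mt low_eq_bot_iff.1 hm)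
  -- In row `i` only column `m` contributes: every other column of `T` has a strictly lower pivot.
  have hrow : (R *ᵥ y) i = R i m * y m := by
    rw [mulVec, dotProduct]
    refine Finset.sum_eq_single m (fun b _ hbm => ?_) (by simp)
    by_cases hb : b ∈ T
    · have hlt : lowM R b < i :=
        hi ▸ (hmax b hb).lt_of_ne (hR b m hbm (Finset.mem_filter.1 hb).2.2 hm)
      rw [show R i b = 0 from apply_eq_zero_of_low_lt (v := column R b) hlt, zero_mul]
    · simp only [T, Finset.mem_filter, Finset.mem_univ, true_and, not_and_or, not_not] at hb
      rcases hb with hyb | hb0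
      · rw [hyb, mul_zero]
      · rw [show R i b = 0 from congrFun hb0 i, zero_mul]
  have hRim : R i m ≠ 0 := apply_ne_zero_of_low_eq (v := column R m) hi.symm
  exact mul_ne_zero hRim hym (hrow ▸ congrFun hRy i)

def pivots {n : ℕ} (R : Matrix (Fin n) (Fin n) (ZMod 2)) : Set (Fin n) :=
  (↑) ⁻¹' (lowM R '' {j | column R j ≠ 0})

lemma ReducedMat.ncard_pivots {n : ℕ} {R : Matrix (Fin n) (Fin n) (ZMod 2)} (hR : ReducedMat R) :
    (pivots R).ncard = {j | column R j ≠ 0}.ncard := by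
  rw [pivots, Set.ncard_preimage_of_injective_subset_range WithBot.coe_injective]
  · exact Set.InjOn.ncard_image fun a ha b hb hab => by_contra fun hne => hR a b hne ha hb hab
  · rintro _ ⟨j, hj, rfl⟩
    exact WithBot.ne_bot_iff_exists.1 (mt low_eq_bot_iff.1 hj)

lemma column_eq_zero_of_mem_pivots {n : ℕ} {D V : Matrix (Fin n) (Fin n) (ZMod 2)}
    (hDD : D * D = 0) (hV : IsUpperUnitriangular V) (hR : ReducedMat (D * V)) {i : Fin n}
    (hi : i ∈ pivots (D * V)) : column (D * V) i = 0 := by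
  obtain ⟨j, -, hji⟩ := hi
  set y := V⁻¹ *ᵥ column (D * V) j
  have hVy : V *ᵥ y = column (D * V) j := by
    rw [mulVec_mulVec, mul_nonsing_inv V hV.isUnit_det, one_mulVec]
  have hRy : (D * V) *ᵥ y = 0 := by
    rw [← mulVec_mulVec, hVy, ← column_mul, ← mul_assoc, hDD, zero_mul]
    rfl
  have hyi : y i ≠ 0 := apply_ne_zero_of_low_eq (by rw [← hV.low_mulVec, hVy]; exact hji)
  by_contra hi
  exact hyi (hR.apply_eq_zero_of_mulVec_eq_zero hRy hi)

lemma ReducedMat.card_eq_two_mul_add {n : ℕ} {R : Matrix (Fin n) (Fin n) (ZMod 2)}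
    (hR : ReducedMat R) (hpiv : pivots R ⊆ {i | column R i = 0}) :
    n = 2 * {j | column R j ≠ 0}.ncard + ({i | column R i = 0} \ pivots R).ncard := by
  have hsplit := Set.ncard_add_ncard_compl {j | column R j ≠ 0}
  have hzero := Set.ncard_sdiff_add_ncard_of_subset hpiv
  simp only [Set.compl_ofPred, not_not, Nat.card_eq_fintype_card,
    Fintype.card_fin] at hsplit
  rw [hR.ncard_pivots] at hzero
  omega

/-- If `R = D·V` is a reduced form of a boundary matrix `D` (with `D·D = 0`), `p` is
the number of nonzero columns of `R` (finite persistence pairs) and `k` is the number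
of zero columns of `R` whose index is not the lowest-one position of any nonzero
column (infinite persistence intervals), then `n = 2·p + k`. -/
theorem card_eq_two_mul_pairs_add_infinite {n : ℕ}
    (D V : Matrix (Fin n) (Fin n) (ZMod 2))
    (hDD : D * D = 0) (hV : IsUpperUnitriangular V) (hR : ReducedMat (D * V)) :
    n = 2 * Nat.card {j : Fin n // column (D * V) j ≠ 0} +
      Nat.card {i : Fin n // column (D * V) i = 0 ∧
        ∀ j : Fin n, column (D * V) j ≠ 0 → lowM (D * V) j ≠ (i : WithBot (Fin n))} := by
  refine (hR.card_eq_two_mul_add fun i hi =>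
    column_eq_zero_of_mem_pivots hDD hV hR hi).trans ?_
  congr 2
  ext i
  simp only [pivots, ne_eq, Set.mem_sdiff, Set.mem_ofPred_eq, Set.mem_preimage, Set.mem_image,
    not_exists, not_and]
  exact Iff.rfl
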